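/- In a square ice configuration matrix with U-turn boundary, mapping WE to 1, NS to −1, and NE, SW, NW, SE to 0 yields a μ-alternating sign matrix with U-turn boundary, and this map χ is a bijection between the set of configuration matrices CM^μ(2n) and the set of μ-UASMs UA^μ(2n). -/

import Mathlib

open scoped Classical

/-- A `μ`-alternating sign matrix with U-turn boundary (μ-UASM):
a `2n × m` matrix over `ℤ` satisfying (UA1)–(UA5). -/
def IsUASM (n m : ℕ) (μ : Fin n → ℕ) (A : Fin (2*n) → Fin m → ℤ) : Prop :=
  (∀ i q, A i q = -1 ∨ A i q = 0 ∨ A i q = 1) ∧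
  (∀ (i : Fin (2*n)) (p : Fin m),
      (∑ q ∈ Finset.univ.filter (fun q => p ≤ q), A i q) = 0 ∨
      (∑ q ∈ Finset.univ.filter (fun q => p ≤ q), A i q) = 1) ∧
  (∀ (j : Fin (2*n)) (q : Fin m),
      (∑ i ∈ Finset.univ.filter (fun i => j ≤ i), A i q) = 0 ∨
      (∑ i ∈ Finset.univ.filter (fun i => j ≤ i), A i q) = 1) ∧
  (∀ k : Fin n,
      (∑ q : Fin m, (A ⟨2*k.val, by have := k.isLt; omega⟩ q
           + A ⟨2*k.val+1, by have := k.isLt; omega⟩ q)) = 1) ∧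
  (∀ q : Fin m, (∑ i, A i q) = if ∃ k, μ k = q.val+1 then 1 else 0)

/-- The six square-ice vertex types, in the order `WE, NS, NE, SW, NW, SE`,
each recorded by which of its four edges (in the order `N, S, E, W`) are
incoming (`true`) or outgoing (`false`). -/
def iceIn : Fin 6 → Fin 4 → Bool :=
  ![![false, false, true,  true ],   -- WE : in W,E ; out N,S
    ![true,  true,  false, false],   -- NS : in N,S ; out W,E
    ![false, true,  false, true ],   -- NE : in W,S ; out N,E
    ![true,  false, true,  false],   -- SW : in N,E ; out S,W
    ![false, true,  true,  false],   -- NW : in E,S ; out N,W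
    ![true,  false, false, true ]]   -- SE : in W,N ; out S,E

/-- The value of each vertex type: `WE ↦ 1`, `NS ↦ −1`, the rest `↦ 0`. -/
def iceVal : Fin 6 → ℤ := ![1, -1, 0, 0, 0, 0]

/-- A square-ice configuration matrix with U-turn boundary for the partition
`μ`: internal edges match up, all right-hand boundary edges are incoming,
all bottom boundary edges are outgoing, each left-hand pair of boundary edges
is a U-turn (one incoming, one outgoing), and the top boundary edge of column
`q` is outgoing precisely when `q` is a part of `μ`. -/
def IsCM (n m : ℕ) (μ : Fin n → ℕ) (C : Fin (2*n) → Fin m → Fin 6) : Prop :=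
  (∀ (i : Fin (2*n)) (q : Fin m) (h : q.val + 1 < m),
      iceIn (C i ⟨q.val+1, h⟩) 3 = ! iceIn (C i q) 2) ∧
  (∀ (i : Fin (2*n)) (q : Fin m) (h : i.val + 1 < 2*n),
      iceIn (C ⟨i.val+1, h⟩ q) 0 = ! iceIn (C i q) 1) ∧
  (∀ (i : Fin (2*n)) (hm0 : 0 < m),
      iceIn (C i ⟨m-1, by omega⟩) 2 = true) ∧
  (∀ (q : Fin m) (hn0 : 0 < n),
      iceIn (C ⟨2*n-1, by omega⟩ q) 1 = false) ∧
  (∀ (q : Fin m) (hn0 : 0 < n),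
      (iceIn (C ⟨0, by omega⟩ q) 0 = false ↔ ∃ k, μ k = q.val + 1)) ∧
  (∀ (k : Fin n) (hm0 : 0 < m),
      iceIn (C ⟨2*k.val, by have := k.isLt; omega⟩ ⟨0, hm0⟩) 3
        = ! iceIn (C ⟨2*k.val+1, by have := k.isLt; omega⟩ ⟨0, hm0⟩) 3)

/-! Each vertex type satisfies `value = [W in] + [E in] - 1 = 1 - [N in] - [S in]`, and adjacent
vertices see a shared edge with opposite orientations. Hence along a row the indicator of
"west edge incoming" telescopes to the partial row sum from that vertex to the right boundary
(where every edge is incoming), and down a column "north edge outgoing" telescopes to the partial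
column sum to the bottom boundary (where every edge is outgoing). So a configuration is determined
by its value matrix, and these partial sums are `0` or `1`. Conversely, in a μ-UASM the partial
sums prescribe an orientation of every edge, and the identity `A i q = r - r' = c - c'` between
consecutive partial sums forces exactly two incoming edges at every vertex, i.e. a vertex type. The
U-turn and top boundary conditions are the total row-pair and column sums. -/

namespace SquareIce

section SuffixSum

variable {M : ℕ}

def suffixSum (f : Fin M → ℤ) (q : Fin M) : ℤ :=
  ∑ p ∈ Finset.univ.filter (fun p => q ≤ p), f p

def strictSuffixSum (f : Fin M → ℤ) (q : Fin M) : ℤ :=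
  ∑ p ∈ Finset.univ.filter (fun p => q < p), f p

lemma suffixSum_eq_add_strictSuffixSum (f : Fin M → ℤ) (q : Fin M) :
    suffixSum f q = f q + strictSuffixSum f q := by
  rw [suffixSum, strictSuffixSum, ← Finset.sum_insert (by simp)]
  congr 1
  ext p
  simp [le_iff_eq_or_lt, eq_comm]

lemma strictSuffixSum_eq_suffixSum_succ (f : Fin M → ℤ) {q : Fin M} (h : q.val + 1 < M) :
    strictSuffixSum f q = suffixSum f ⟨q.val + 1, h⟩ := by
  rw [suffixSum, strictSuffixSum]
  congr 1

lemma strictSuffixSum_eq_zero_of_le (f : Fin M → ℤ) {q : Fin M} (h : M ≤ q.val + 1) :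
    strictSuffixSum f q = 0 := by
  refine Finset.sum_eq_zero fun p hp => absurd (Finset.mem_filter.1 hp).2 ?_
  simp only [Fin.lt_def, not_lt]
  omega

lemma suffixSum_zero_eq_sum (f : Fin M → ℤ) (h : 0 < M) :
    suffixSum f ⟨0, h⟩ = ∑ p, f p := by
  rw [suffixSum, Finset.filter_true_of_mem fun p _ => Fin.mk_le_of_le_val (Nat.zero_le _)]

lemma strictSuffixSum_eq_zero_or_one {f : Fin M → ℤ}
    (hf : ∀ q, suffixSum f q = 0 ∨ suffixSum f q = 1) (q : Fin M) :
    strictSuffixSum f q = 0 ∨ strictSuffixSum f q = 1 := by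
  by_cases h : q.val + 1 < M
  · rw [strictSuffixSum_eq_suffixSum_succ f h]
    exact hf _
  · exact Or.inl (strictSuffixSum_eq_zero_of_le f (by omega))

lemma eq_suffixSum_of_step {f b : Fin M → ℤ}
    (hstep : ∀ (q : Fin M) (h : q.val + 1 < M), b q = f q + b ⟨q.val + 1, h⟩)
    (hlast : ∀ q : Fin M, M ≤ q.val + 1 → b q = f q) (q : Fin M) :
    b q = suffixSum f q := by
  induction h : M - q.val generalizing q with
  | zero => omega
  | succ k ih =>
    rw [suffixSum_eq_add_strictSuffixSum]
    by_cases hq : q.val + 1 < M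
    · rw [hstep q hq, strictSuffixSum_eq_suffixSum_succ f hq, ih _ (by simp; omega)]
    · rw [hlast q (by omega), strictSuffixSum_eq_zero_of_le f (by omega), add_zero]

end SuffixSum

lemma toInt_injective : Function.Injective Bool.toInt := by decide

lemma toInt_eq_zero_or_one (b : Bool) : b.toInt = 0 ∨ b.toInt = 1 := by cases b <;> simp

lemma toInt_not (b : Bool) : (!b).toInt = 1 - b.toInt := by cases b <;> rfl

lemma toInt_decide_eq_one {x : ℤ} (hx : x = 0 ∨ x = 1) : (decide (x = 1)).toInt = x := by
  rcases hx with rfl | rfl <;> rfl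

lemma toInt_decide_eq_zero {x : ℤ} (hx : x = 0 ∨ x = 1) : (decide (x = 0)).toInt = 1 - x := by
  rcases hx with rfl | rfl <;> rfl

lemma decide_toInt_eq_one (b : Bool) : decide (b.toInt = 1) = b := by cases b <;> rfl

lemma decide_one_sub_toInt_eq_zero (b : Bool) : decide (1 - b.toInt = 0) = b := by
  cases b <;> rfl

lemma iceVal_eq_west_add_east (t : Fin 6) :
    iceVal t = (iceIn t 3).toInt + (iceIn t 2).toInt - 1 := by
  revert t; decide

lemma iceVal_eq_one_sub_north_sub_south (t : Fin 6) :
    iceVal t = 1 - (iceIn t 0).toInt - (iceIn t 1).toInt := by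
  revert t; decide

lemma iceVal_mem (t : Fin 6) : iceVal t = -1 ∨ iceVal t = 0 ∨ iceVal t = 1 := by
  revert t; decide

lemma iceIn_injective : Function.Injective iceIn := by decide

lemma exists_iceIn_eq (b : Fin 4 → Bool) (h : ∑ k, (b k).toInt = 2) : ∃ t, iceIn t = b := by
  revert b; decide

variable {N M : ℕ}

def iceValues (C : Fin N → Fin M → Fin 6) : Fin N → Fin M → ℤ := fun i q => iceVal (C i q)

/-- The orientations `N, S, E, W` of the edges around position `(i, q)` as dictated by the partial
row and column sums of `A`. -/
def edgeIn (A : Fin N → Fin M → ℤ) (i : Fin N) (q : Fin M) : Fin 4 → Bool :=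
  ![decide (suffixSum (A · q) i = 0), decide (strictSuffixSum (A · q) i = 1),
    decide (strictSuffixSum (A i) q = 0), decide (suffixSum (A i) q = 1)]

noncomputable def ofValues (A : Fin N → Fin M → ℤ) : Fin N → Fin M → Fin 6 :=
  fun i q => Function.invFun iceIn (edgeIn A i q)

section Configuration

variable {n m : ℕ} {μ : Fin n → ℕ} {C : Fin (2*n) → Fin m → Fin 6}

lemma toInt_west_eq_suffixSum (hC : IsCM n m μ C) (i : Fin (2*n)) (q : Fin m) :
    (iceIn (C i q) 3).toInt = suffixSum (iceValues C i) q := by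
  refine eq_suffixSum_of_step (b := fun q => (iceIn (C i q) 3).toInt) (f := iceValues C i)
    (fun q h => ?_) (fun q h => ?_) q
  · rw [iceValues, iceVal_eq_west_add_east, hC.1 i q h, toInt_not]
    ring
  · have hq : q = ⟨m - 1, by omega⟩ := Fin.ext (by simp; omega)
    rw [hq, iceValues, iceVal_eq_west_add_east, hC.2.2.1 i (by omega)]
    simp

lemma toInt_north_eq_one_sub_suffixSum (hC : IsCM n m μ C) (i : Fin (2*n)) (q : Fin m) :
    (iceIn (C i q) 0).toInt = 1 - suffixSum (iceValues C · q) i := by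
  have key := eq_suffixSum_of_step (f := (iceValues C · q))
    (b := fun j => 1 - (iceIn (C j q) 0).toInt) (fun j h => ?_) (fun j h => ?_) i
  · linarith
  · rw [iceValues, iceVal_eq_one_sub_north_sub_south, hC.2.1 j q h, toInt_not]
    ring
  · have hj : j = ⟨2 * n - 1, by omega⟩ := Fin.ext (by simp; omega)
    rw [hj, iceValues, iceVal_eq_one_sub_north_sub_south, hC.2.2.2.1 q (by omega)]
    simp

lemma edgeIn_iceValues (hC : IsCM n m μ C) (i : Fin (2*n)) (q : Fin m) :
    edgeIn (iceValues C) i q = iceIn (C i q) := by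
  have hW := (toInt_west_eq_suffixSum hC i q).symm
  have hN : suffixSum (iceValues C · q) i = 1 - (iceIn (C i q) 0).toInt := by
    linarith [toInt_north_eq_one_sub_suffixSum hC i q]
  have hE : strictSuffixSum (iceValues C i) q = 1 - (iceIn (C i q) 2).toInt := by
    have := suffixSum_eq_add_strictSuffixSum (iceValues C i) q
    have := iceVal_eq_west_add_east (C i q)
    simp only [iceValues] at *
    linarith
  have hS : strictSuffixSum (iceValues C · q) i = (iceIn (C i q) 1).toInt := by
    have := suffixSum_eq_add_strictSuffixSum (iceValues C · q) i
    have := iceVal_eq_one_sub_north_sub_south (C i q)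
    simp only [iceValues] at *
    linarith
  funext k
  fin_cases k <;>
    simp [edgeIn, hN, hS, hE, hW, decide_toInt_eq_one, decide_one_sub_toInt_eq_zero]

lemma ofValues_iceValues (hC : IsCM n m μ C) : ofValues (iceValues C) = C := by
  funext i q
  rw [ofValues, edgeIn_iceValues hC, Function.leftInverse_invFun iceIn_injective]

lemma isUASM_iceValues (hn : 0 < n) (hm : 0 < m) (hC : IsCM n m μ C) :
    IsUASM n m μ (iceValues C) := by
  refine ⟨fun i q => iceVal_mem _, fun i p => ?_, fun j q => ?_, fun k => ?_, fun q => ?_⟩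
  · change suffixSum (iceValues C i) p = 0 ∨ suffixSum (iceValues C i) p = 1
    rw [← toInt_west_eq_suffixSum hC]
    exact toInt_eq_zero_or_one _
  · change suffixSum (iceValues C · q) j = 0 ∨ suffixSum (iceValues C · q) j = 1
    have := toInt_north_eq_one_sub_suffixSum hC j q
    rcases toInt_eq_zero_or_one (iceIn (C j q) 0) with h | h <;> omega
  · rw [Finset.sum_add_distrib, ← suffixSum_zero_eq_sum _ hm, ← suffixSum_zero_eq_sum _ hm,
      ← toInt_west_eq_suffixSum hC, ← toInt_west_eq_suffixSum hC, hC.2.2.2.2.2 k hm, toInt_not]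
    ring
  · have hcol := toInt_north_eq_one_sub_suffixSum hC ⟨0, by omega⟩ q
    rw [suffixSum_zero_eq_sum _ (by omega)] at hcol
    have hpart := hC.2.2.2.2.1 q hn
    change ∑ i, iceValues C i q = _
    split_ifs with hq
    · rw [hpart.2 hq] at hcol
      simp at hcol
      omega
    · rw [show iceIn (C ⟨0, _⟩ q) 0 = true by simpa using mt hpart.1 hq] at hcol
      simp at hcol
      omega

end Configuration

section UASM

variable {n m : ℕ} {μ : Fin n → ℕ} {A : Fin (2*n) → Fin m → ℤ}

lemma toInt_edgeIn (hA : IsUASM n m μ A) (i : Fin (2*n)) (q : Fin m) :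
    (edgeIn A i q 0).toInt = 1 - suffixSum (A · q) i ∧
    (edgeIn A i q 1).toInt = strictSuffixSum (A · q) i ∧
    (edgeIn A i q 2).toInt = 1 - strictSuffixSum (A i) q ∧
    (edgeIn A i q 3).toInt = suffixSum (A i) q := by
  have hrow : ∀ i p, suffixSum (A i) p = 0 ∨ suffixSum (A i) p = 1 := hA.2.1
  have hcol : ∀ j q, suffixSum (A · q) j = 0 ∨ suffixSum (A · q) j = 1 := hA.2.2.1
  exact ⟨toInt_decide_eq_zero (hcol i q),
    toInt_decide_eq_one (strictSuffixSum_eq_zero_or_one (hcol · q) i),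
    toInt_decide_eq_zero (strictSuffixSum_eq_zero_or_one (hrow i) q),
    toInt_decide_eq_one (hrow i q)⟩

lemma iceIn_ofValues (hA : IsUASM n m μ A) (i : Fin (2*n)) (q : Fin m) :
    iceIn (ofValues A i q) = edgeIn A i q := by
  obtain ⟨hN, hS, hE, hW⟩ := toInt_edgeIn hA i q
  refine Function.invFun_eq (exists_iceIn_eq _ ?_)
  rw [Fin.sum_univ_four, hN, hS, hE, hW, suffixSum_eq_add_strictSuffixSum (A i),
    suffixSum_eq_add_strictSuffixSum (A · q)]
  ring

lemma iceValues_ofValues (hA : IsUASM n m μ A) : iceValues (ofValues A) = A := by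
  funext i q
  obtain ⟨-, -, hE, hW⟩ := toInt_edgeIn hA i q
  have := suffixSum_eq_add_strictSuffixSum (A i) q
  rw [iceValues, iceVal_eq_west_add_east, iceIn_ofValues hA, hE, hW]
  linarith

lemma isCM_ofValues (hA : IsUASM n m μ A) : IsCM n m μ (ofValues A) := by
  simp only [IsCM, iceIn_ofValues hA]
  refine ⟨fun i q h => ?_, fun i q h => ?_, fun i h => ?_, fun q h => ?_, fun q h => ?_,
    fun k h => ?_⟩
  · apply toInt_injective
    rw [toInt_not, (toInt_edgeIn hA _ _).2.2.2, (toInt_edgeIn hA _ _).2.2.1,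
      strictSuffixSum_eq_suffixSum_succ _ h]
    ring
  · apply toInt_injective
    rw [toInt_not, (toInt_edgeIn hA _ _).1, (toInt_edgeIn hA _ _).2.1,
      strictSuffixSum_eq_suffixSum_succ _ h]
  · apply toInt_injective
    rw [(toInt_edgeIn hA _ _).2.2.1, strictSuffixSum_eq_zero_of_le _ (by simp; omega)]
    rfl
  · apply toInt_injective
    rw [(toInt_edgeIn hA _ _).2.1, strictSuffixSum_eq_zero_of_le _ (by simp; omega)]
    rfl
  · have hpart := hA.2.2.2.2 q
    rw [← suffixSum_zero_eq_sum (A · q) (by omega)] at hpart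
    simp only [edgeIn, Matrix.cons_val_zero, hpart]
    split_ifs with hq <;> simp [hq]
  · apply toInt_injective
    rw [toInt_not, (toInt_edgeIn hA _ _).2.2.2, (toInt_edgeIn hA _ _).2.2.2, suffixSum_zero_eq_sum,
      suffixSum_zero_eq_sum]
    have := hA.2.2.2.1 k
    rw [Finset.sum_add_distrib] at this
    linarith

end UASM

end SquareIce

theorem ice_bijection_general (n m : ℕ) (hn : 0 < n) (μ : Fin n → ℕ)
    (hpos : ∀ i, 0 < μ i) (hm : m = μ ⟨0, hn⟩) :
    Set.BijOn
      (fun (C : Fin (2*n) → Fin m → Fin 6) => fun i q => iceVal (C i q))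
      {C | IsCM n m μ C} {A | IsUASM n m μ A} := by
  have hm0 : 0 < m := hm ▸ hpos _
  exact Set.InvOn.bijOn (f' := SquareIce.ofValues)
    ⟨fun C hC => SquareIce.ofValues_iceValues hC, fun A hA => SquareIce.iceValues_ofValues hA⟩
    (fun C hC => SquareIce.isUASM_iceValues hn hm0 hC) (fun A hA => SquareIce.isCM_ofValues hA)

/-- Replacing `WE` by `1`, `NS` by `−1` and `NE, SW, NW, SE` by `0` maps
square-ice configuration matrices with U-turn boundary bijectively onto
`μ`-UASMs. -/
theorem ice_bijection (n m : ℕ) (hn : 0 < n) (μ : Fin n → ℕ)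
    (hμ : StrictAnti μ) (hpos : ∀ i, 0 < μ i) (hm : m = μ ⟨0, hn⟩) :
    Set.BijOn
      (fun (C : Fin (2*n) → Fin m → Fin 6) => fun i q => iceVal (C i q))
      {C | IsCM n m μ C} {A | IsUASM n m μ A} :=
  ice_bijection_general n m hn μ hpos hm
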